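/- arXiv:2201.03177 — 3 statements merged into one kernel-verified Lean document; each statement's English description precedes it below -/
import Mathlib

section
/- The map H : Conf_2^{ab}(SU_2) × [0,1] → Conf_2^{ab}(SU_2) given by H(A,B,t) = (A, (t(−A)+(1−t)B)/‖t(−A)+(1−t)B‖), where matrices in SU_2 are regarded as unit vectors in ℝ⁴ (unit quaternions), is well defined: for all (A,B) ∈ Conf_2^{ab}(SU_2) and t ∈ [0,1], the vector t(−A)+(1−t)B is nonzero, its normalization lies in SU_2, commutes with A, and is different from A. -/
open Quaternion

/-- Well-definedness of the homotopy `H(A,B,t) = (A, (t(−A)+(1−t)B)/‖t(−A)+(1−t)B‖)` on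
`Conf₂^{ab}(SU₂)`, where `SU₂` is identified with the unit quaternions: for distinct
commuting unit quaternions `A ≠ B` and `t ∈ [0,1]`, the vector `t(−A)+(1−t)B` is nonzero,
its normalization is a unit quaternion which commutes with `A` and differs from `A`. -/
theorem homotopy_H_well_defined (A B : ℍ[ℝ])
    (hA : ‖A‖ = 1) (hB : ‖B‖ = 1) (hne : A ≠ B) (hAB : A * B = B * A)
    (t : ℝ) (ht : t ∈ Set.Icc (0 : ℝ) 1) :
    t • (-A) + (1 - t) • B ≠ 0 ∧
    ‖‖t • (-A) + (1 - t) • B‖⁻¹ • (t • (-A) + (1 - t) • B)‖ = 1 ∧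
    A * (‖t • (-A) + (1 - t) • B‖⁻¹ • (t • (-A) + (1 - t) • B)) =
      (‖t • (-A) + (1 - t) • B‖⁻¹ • (t • (-A) + (1 - t) • B)) * A ∧
    ‖t • (-A) + (1 - t) • B‖⁻¹ • (t • (-A) + (1 - t) • B) ≠ A := by
  obtain ⟨ht0, ht1⟩ := ht
  set v := t • (-A) + (1 - t) • B with hv_def
  have hv : v ≠ 0 := by
    intro h
    have h1 : t • A = (1 - t) • B := by
      rwa [hv_def, smul_neg, neg_add_eq_zero] at h
    have hn : |t| * ‖A‖ = |1 - t| * ‖B‖ := by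
      have := congrArg (‖·‖) h1
      simpa [norm_smul, Real.norm_eq_abs] using this
    rw [hA, hB, abs_of_nonneg ht0, abs_of_nonneg (by linarith)] at hn
    have hthalf : t = 1/2 := by linarith
    have : B = A := by
      have h2 : t • A = t • B := by rw [h1, hthalf]; norm_num
      have := smul_right_injective ℍ[ℝ] (by rw [hthalf]; norm_num : t ≠ 0) h2
      exact this.symm
    exact hne this.symm
  have hvn : ‖v‖ ≠ 0 := norm_ne_zero_iff.mpr hv
  refine ⟨hv, ?_, ?_, ?_⟩
  · rw [norm_smul, norm_inv, Real.norm_eq_abs, abs_of_nonneg (norm_nonneg v),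
      inv_mul_cancel₀ hvn]
  · simp only [hv_def, smul_add, smul_smul, smul_neg, mul_add, add_mul, mul_neg,
      neg_mul, mul_smul_comm, smul_mul_assoc, hAB]
  · intro h
    have hveq : v = ‖v‖ • A := by
      have := congrArg (‖v‖ • ·) h
      simpa [smul_smul, mul_inv_cancel₀ hvn] using this
    have h1 : (1 - t) • B = (‖v‖ + t) • A := by
      have : t • (-A) + (1 - t) • B = ‖v‖ • A := hveq
      rw [smul_neg] at this
      rw [add_smul]
      rw [← neg_add_eq_iff_eq_add.mpr this.symm]
      abel
    have hvpos : 0 < ‖v‖ := (norm_nonneg v).lt_of_ne (Ne.symm hvn)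
    have hn : |1 - t| * ‖B‖ = |‖v‖ + t| * ‖A‖ := by
      have := congrArg (‖·‖) h1
      simpa [norm_smul, Real.norm_eq_abs] using this
    rw [hA, hB, abs_of_nonneg (by linarith), abs_of_nonneg (by linarith)] at hn
    have h1t : (1 : ℝ) - t ≠ 0 := by
      intro hz
      rw [hz] at hn; linarith
    have h2 : (1 - t) • B = (1 - t) • A := by rw [h1]; congr 1; linarith
    exact hne (smul_right_injective ℍ[ℝ] h1t h2).symm
end

section
/- The space Conf_2^{ab}(SU_2) of pairs of distinct commuting elements of SU_2 is homotopy equivalent to SU_2; more precisely, the first projection pr_1 : Conf_2^{ab}(SU_2) → SU_2 is a homotopy equivalence with homotopy inverse g(A) = (A, −A). -/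
open Quaternion

lemma combo_ne_zero {A B : ℍ[ℝ]} (hA : ‖A‖ = 1) (hB : ‖B‖ = 1) (hne : A ≠ B)
    {t : ℝ} (ht0 : 0 ≤ t) (ht1 : t ≤ 1) : t • B - (1 - t) • A ≠ 0 := by
  intro h
  rw [sub_eq_zero] at h
  have hn : t * ‖B‖ = (1 - t) * ‖A‖ := by
    have := congrArg norm h
    rwa [norm_smul, norm_smul, Real.norm_eq_abs, Real.norm_eq_abs,
      abs_of_nonneg ht0, abs_of_nonneg (by linarith)] at this
  rw [hA, hB, mul_one, mul_one] at hn
  have ht : t = 1/2 := by linarith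
  subst ht
  apply hne
  have := h
  rw [show (1:ℝ) - 1/2 = 1/2 by norm_num] at this
  have h2 : ((1:ℝ)/2)⁻¹ • ((1:ℝ)/2) • B = ((1:ℝ)/2)⁻¹ • ((1:ℝ)/2) • A := by rw [this]
  rwa [smul_smul, smul_smul, inv_mul_cancel₀ (by norm_num), one_smul, one_smul, eq_comm] at h2

lemma combo_ne {A B : ℍ[ℝ]} (hA : ‖A‖ = 1) (hB : ‖B‖ = 1) (hne : A ≠ B)
    {t : ℝ} (ht0 : 0 ≤ t) (ht1 : t ≤ 1) :
    A ≠ ‖t • B - (1 - t) • A‖⁻¹ • (t • B - (1 - t) • A) := by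
  set c := t • B - (1 - t) • A with hc
  have hc0 : c ≠ 0 := combo_ne_zero hA hB hne ht0 ht1
  have hr : 0 < ‖c‖ := norm_pos_iff.mpr hc0
  intro h
  have h1 : ‖c‖ • A = c := by
    rw [h, smul_smul, mul_inv_cancel₀ (ne_of_gt hr), one_smul]
  have h2 : t • B = (‖c‖ + 1 - t) • A := by
    rw [hc] at h1
    have : t • B = ‖c‖ • A + (1 - t) • A := by
      rw [h1]; abel
    rw [this, ← add_smul]; ring_nf
  have hn : t * ‖B‖ = |‖c‖ + 1 - t| * ‖A‖ := by
    have := congrArg norm h2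
    rwa [norm_smul, norm_smul, Real.norm_eq_abs, Real.norm_eq_abs, abs_of_nonneg ht0] at this
  rw [hA, hB, mul_one, mul_one, abs_of_pos (by linarith)] at hn
  -- t = ‖c‖ + 1 - t, so t > 0
  have ht : 0 < t := by linarith
  have : t • B = t • A := by rw [h2, ← hn]
  have hBA : B = A := by
    have := congrArg (fun x => t⁻¹ • x) this
    simpa [smul_smul, inv_mul_cancel₀ (ne_of_gt ht)] using this
  exact hne hBA.symm

noncomputable section

abbrev Conf2 := {p : ℍ[ℝ] × ℍ[ℝ] // ‖p.1‖ = 1 ∧ ‖p.2‖ = 1 ∧ p.1 ≠ p.2 ∧ p.1 * p.2 = p.2 * p.1}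
abbrev SU2 := {q : ℍ[ℝ] // ‖q‖ = 1}

def fmap : C(Conf2, SU2) :=
  ⟨fun p => ⟨p.1.1, p.2.1⟩, Continuous.subtype_mk (continuous_fst.comp continuous_subtype_val) _⟩

lemma ne_neg_self {q : ℍ[ℝ]} (hq : ‖q‖ = 1) : q ≠ -q := by
  intro h
  have h0 : q = 0 := by
    have : q + q = 0 := by nth_rewrite 2 [h]; simp
    have h2 : (2:ℝ) • q = 0 := by rw [two_smul]; exact this
    simpa using (smul_eq_zero.mp h2).resolve_left (by norm_num)
  rw [h0] at hq; simp at hq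

def gmap : C(SU2, Conf2) :=
  ⟨fun q => ⟨(q.1, -q.1), q.2, by simpa using q.2, ne_neg_self q.2, by rw [mul_neg, neg_mul]⟩,
    Continuous.subtype_mk (continuous_subtype_val.prodMk continuous_subtype_val.neg) _⟩

def cfun (x : unitInterval × Conf2) : ℍ[ℝ] :=
  (x.1 : ℝ) • x.2.1.2 - (1 - (x.1 : ℝ)) • x.2.1.1

lemma combo_comm {A B : ℍ[ℝ]} (hcomm : A * B = B * A) (t : ℝ) :
    A * (t • B - (1 - t) • A) = (t • B - (1 - t) • A) * A := by
  rw [mul_sub, sub_mul, mul_smul_comm, mul_smul_comm, smul_mul_assoc, smul_mul_assoc, hcomm]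

lemma cfun_continuous : Continuous cfun := by
  unfold cfun; fun_prop

lemma cfun_ne_zero (x : unitInterval × Conf2) : cfun x ≠ 0 :=
  combo_ne_zero x.2.2.1 x.2.2.2.1 x.2.2.2.2.1 x.1.2.1 x.1.2.2

def Hmap : (gmap.comp fmap).Homotopy (ContinuousMap.id Conf2) where
  toFun := fun x =>
    ⟨(x.2.1.1, ‖cfun x‖⁻¹ • cfun x), x.2.2.1, by
        rw [norm_smul, Real.norm_eq_abs, abs_of_nonneg (inv_nonneg.mpr (norm_nonneg _)),
          inv_mul_cancel₀ (norm_ne_zero_iff.mpr (cfun_ne_zero x))], by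
        exact combo_ne x.2.2.1 x.2.2.2.1 x.2.2.2.2.1 x.1.2.1 x.1.2.2, by
        rw [mul_smul_comm, smul_mul_assoc]
        rw [show (x.2.val).1 * cfun x = cfun x * (x.2.val).1 from
          combo_comm x.2.2.2.2.2 _]⟩
  continuous_toFun := by
    apply Continuous.subtype_mk
    apply Continuous.prodMk
    · fun_prop
    · exact ((cfun_continuous.norm.inv₀ fun x => norm_ne_zero_iff.mpr (cfun_ne_zero x)).smul cfun_continuous)
  map_zero_left := fun p => by
    apply Subtype.ext
    show (p.1.1, _) = (p.1.1, -p.1.1)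
    have hc : cfun (0, p) = -p.1.1 := by simp [cfun]
    rw [hc]
    simp [p.2.1]
  map_one_left := fun p => by
    apply Subtype.ext
    show (p.1.1, _) = p.1
    have hc : cfun (1, p) = p.1.2 := by simp [cfun]
    rw [hc]
    rw [p.2.2.1]
    simp

end

lemma fg_eq_id : fmap.comp gmap = ContinuousMap.id SU2 := by
  ext q <;> rfl

/-- `Conf₂^{ab}(SU₂)`, the space of pairs of distinct commuting unit quaternions
(identifying `SU₂` with the unit quaternions), is homotopy equivalent to `SU₂`,
via a homotopy equivalence given by the first projection, with homotopy inverse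
`A ↦ (A, −A)`. -/
theorem confAb_two_SU2_homotopyEquiv_SU2 :
    ∃ e : ContinuousMap.HomotopyEquiv
        {p : ℍ[ℝ] × ℍ[ℝ] // ‖p.1‖ = 1 ∧ ‖p.2‖ = 1 ∧ p.1 ≠ p.2 ∧ p.1 * p.2 = p.2 * p.1}
        {q : ℍ[ℝ] // ‖q‖ = 1},
      (∀ p, (e.toFun p : ℍ[ℝ]) = p.val.1) ∧
      (∀ q, ((e.invFun q : { p : ℍ[ℝ] × ℍ[ℝ] // ‖p.1‖ = 1 ∧ ‖p.2‖ = 1 ∧ p.1 ≠ p.2 ∧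
          p.1 * p.2 = p.2 * p.1}) : ℍ[ℝ] × ℍ[ℝ]) = (q.val, -q.val)) := by
  refine ⟨⟨fmap, gmap, ⟨Hmap⟩, fg_eq_id ▸ ContinuousMap.Homotopic.refl _⟩, fun p => rfl, fun q => rfl⟩
end

section
/- The map (z, t_1, ..., t_{k−1}) ↦ (z, z·e^{2πi t_1}, ..., z·e^{2πi t_{k−1}}) is a homeomorphism from S¹ × Conf_{k−1}((0,1)) onto Conf_k(S¹). -/
open Real

section CircleConfAux

open Set

local instance : Fact ((0:ℝ) < 1) := ⟨one_pos⟩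

noncomputable def myH : AddCircle (1:ℝ) ≃ₜ Circle := AddCircle.homeomorphCircle one_ne_zero

lemma myH_mk (x : ℝ) : myH x = Circle.exp (2 * π * x) := by
  rw [myH, AddCircle.homeomorphCircle_apply, AddCircle.toCircle_apply_mk]
  norm_num

lemma exp_ne_one_of_Ioo {t : ℝ} (ht : t ∈ Ioo (0:ℝ) 1) : Circle.exp (2 * π * t) ≠ 1 := by
  intro h
  obtain ⟨m, hm⟩ := Circle.exp_eq_one.mp h
  have hπ : (2 * π) ≠ 0 := by positivity
  have ht' : t = (m : ℝ) := mul_left_cancel₀ hπ (by linarith)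
  rw [ht'] at ht
  rcases ht with ⟨h0, h1⟩
  have : (0:ℤ) < m := by exact_mod_cast h0
  have : (1:ℝ) ≤ (m:ℝ) := by exact_mod_cast this
  linarith

noncomputable def myPhi : Ioo (0:ℝ) 1 ≃ₜ {w : Circle // w ≠ 1} where
  toFun t := ⟨Circle.exp (2 * π * (t : ℝ)), exp_ne_one_of_Ioo t.2⟩
  invFun w := by
    refine ⟨(AddCircle.equivIoc (1:ℝ) 0 (myH.symm w.1) : ℝ), ?_⟩
    obtain ⟨h0, h1⟩ := (AddCircle.equivIoc (1:ℝ) 0 (myH.symm w.1)).2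
    refine ⟨h0, lt_of_le_of_ne (by simpa using h1) fun h1' => w.2 ?_⟩
    have hq : ((AddCircle.equivIoc (1:ℝ) 0 (myH.symm w.1) : ℝ) : AddCircle (1:ℝ)) = myH.symm w.1 :=
      (AddCircle.equivIoc (1:ℝ) 0).symm_apply_apply _
    rw [h1'] at hq
    have h2 : ((1:ℝ) : AddCircle (1:ℝ)) = (((0:ℝ)) : AddCircle (1:ℝ)) := by
      rw [AddCircle.coe_period]; norm_cast
    rw [h2] at hq
    have h3 := congrArg myH hq
    rw [Homeomorph.apply_symm_apply, myH_mk] at h3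
    rw [← h3]
    simp
  left_inv t := by
    have h1 : myH.symm (Circle.exp (2 * π * (t:ℝ))) = (((t:ℝ)) : AddCircle (1:ℝ)) := by
      rw [← myH_mk, Homeomorph.symm_apply_apply]
    have h2 : AddCircle.equivIoc (1:ℝ) 0 (((t:ℝ)) : AddCircle (1:ℝ))
        = ⟨(t:ℝ), t.2.1, by simpa using t.2.2.le⟩ := by
      rw [Equiv.apply_eq_iff_eq_symm_apply]; rfl
    ext
    simp only [h1, h2]
  right_inv w := by
    have hq : ((AddCircle.equivIoc (1:ℝ) 0 (myH.symm w.1) : ℝ) : AddCircle (1:ℝ)) = myH.symm w.1 :=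
      (AddCircle.equivIoc (1:ℝ) 0).symm_apply_apply _
    ext
    have h3 := congrArg myH hq
    rw [Homeomorph.apply_symm_apply, myH_mk] at h3
    simpa using congrArg Subtype.val h3
  continuous_toFun := by
    apply Continuous.subtype_mk
    exact Circle.exp.continuous.comp (continuous_const.mul continuous_subtype_val)
  continuous_invFun := by
    have hc : Continuous fun w : {w : Circle // w ≠ 1} =>
        ((AddCircle.equivIoc (1:ℝ) 0 (myH.symm w.1)) : ℝ) := by
      rw [continuous_iff_continuousAt]
      intro w
      have hne : myH.symm w.1 ≠ (((0:ℝ)) : AddCircle (1:ℝ)) := by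
        intro h
        apply w.2
        have := congrArg myH h
        rw [Homeomorph.apply_symm_apply, myH_mk] at this
        simpa using this
      have c1 : ContinuousAt (fun w : {w : Circle // w ≠ 1} => myH.symm w.1) w :=
        (myH.symm.continuous.comp continuous_subtype_val).continuousAt
      have c2 : ContinuousAt (fun y : AddCircle (1:ℝ) => ((AddCircle.equivIoc (1:ℝ) 0 y : ℝ)))
          (myH.symm w.1) :=
        continuousAt_subtype_val.comp (AddCircle.continuousAt_equivIoc (1:ℝ) 0 hne)
      simpa [Function.comp_def] using ContinuousAt.comp (f := fun w : {w : Circle // w ≠ 1} => myH.symm w.1) c2 c1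
    exact hc.subtype_mk _

lemma myPhi_apply (t : Ioo (0:ℝ) 1) : (myPhi t).1 = Circle.exp (2 * π * (t : ℝ)) := rfl

lemma myPhi_ne_one (t : Ioo (0:ℝ) 1) : (myPhi t).1 ≠ 1 := (myPhi t).2

noncomputable def myE (n : ℕ) :
    (Circle × {t : Fin n → Set.Ioo (0 : ℝ) 1 // Function.Injective t}) ≃ₜ
      {f : Fin (n + 1) → Circle // Function.Injective f} where
  toFun p := ⟨Fin.cons p.1 (fun i => p.1 * (myPhi (p.2.1 i)).1), by
    intro i j h
    induction i using Fin.cases with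
    | zero =>
      induction j using Fin.cases with
      | zero => rfl
      | succ j =>
        simp only [Fin.cons_zero, Fin.cons_succ] at h
        exact absurd (left_eq_mul.mp h) (myPhi_ne_one _)
    | succ i =>
      induction j using Fin.cases with
      | zero =>
        simp only [Fin.cons_zero, Fin.cons_succ] at h
        exact absurd (left_eq_mul.mp h.symm) (myPhi_ne_one _)
      | succ j =>
        simp only [Fin.cons_succ] at h
        have h2 : myPhi (p.2.1 i) = myPhi (p.2.1 j) := Subtype.ext (mul_left_cancel h)
        have h3 : p.2.1 i = p.2.1 j := myPhi.toEquiv.injective h2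
        exact congrArg Fin.succ (p.2.2 h3)⟩
  invFun f :=
    (f.1 0, ⟨fun i => myPhi.symm ⟨(f.1 0)⁻¹ * f.1 i.succ, by
        intro h
        have : f.1 0 = f.1 i.succ := by
          rw [inv_mul_eq_one] at h; exact h
        exact Fin.succ_ne_zero i (f.2 this.symm)⟩, by
      intro i j h
      have h2 := congrArg (fun x => ((myPhi x : {w : Circle // w ≠ 1}) : Circle)) h
      simp only [Homeomorph.apply_symm_apply] at h2
      have h3 : f.1 i.succ = f.1 j.succ := mul_left_cancel h2
      exact Fin.succ_injective n (f.2 h3)⟩)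
  left_inv p := by
    obtain ⟨z, t⟩ := p
    refine Prod.ext (by simp) ?_
    refine Subtype.ext (funext fun i => ?_)
    simp only [Fin.cons_succ, Fin.cons_zero]
    simp only [inv_mul_cancel_left]
    exact myPhi.symm_apply_apply _
  right_inv f := by
    refine Subtype.ext (funext fun x => ?_)
    induction x using Fin.cases with
    | zero => simp
    | succ i =>
      simp only [Fin.cons_succ, Homeomorph.apply_symm_apply]
      exact mul_inv_cancel_left _ _
  continuous_toFun := by
    apply Continuous.subtype_mk
    apply continuous_pi
    intro i
    refine Fin.cases ?_ (fun i => ?_) i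
    · simp only [Fin.cons_zero]
      exact continuous_fst
    · simp only [Fin.cons_succ]
      have hc : Continuous fun p : Circle × {t : Fin n → Set.Ioo (0:ℝ) 1 // Function.Injective t}
          => ((myPhi (p.2.1 i)) : Circle) :=
        continuous_subtype_val.comp (myPhi.continuous.comp
          ((continuous_apply i).comp (continuous_subtype_val.comp continuous_snd)))
      exact continuous_fst.mul hc
  continuous_invFun := by
    refine Continuous.prodMk ?_ ?_
    · exact (continuous_apply 0).comp continuous_subtype_val
    · apply Continuous.subtype_mk
      apply continuous_pi
      intro i
      apply myPhi.symm.continuous.comp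
      apply Continuous.subtype_mk
      exact (((continuous_apply (0 : Fin (n+1))).comp continuous_subtype_val).inv).mul
        ((continuous_apply i.succ).comp continuous_subtype_val)


end CircleConfAux

/-- For `k ≥ 2` (written `k = n + 1` with `n ≥ 1`), the map
`(z, t₁, …, t_{k−1}) ↦ (z, z·e^{2πi t₁}, …, z·e^{2πi t_{k−1}})` is a homeomorphism from
`S¹ × Conf_{k−1}((0,1))` onto `Conf_k(S¹)`. -/
theorem circle_times_conf_interval_homeomorph_conf_circle (n : ℕ) (hn : 1 ≤ n) :
    ∃ e : (Circle × {t : Fin n → Set.Ioo (0 : ℝ) 1 // Function.Injective t}) ≃ₜ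
        {f : Fin (n + 1) → Circle // Function.Injective f},
      ∀ (z : Circle) (t : {t : Fin n → Set.Ioo (0 : ℝ) 1 // Function.Injective t}),
        (e (z, t)).val =
          Fin.cons z (fun i => z * Circle.exp (2 * π * ((t.val i : ℝ)))) := by
  exact ⟨myE n, fun z t => rfl⟩
end
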